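/- Let \(P\) be a unitary with \(P|0\rangle = \frac{1}{\sqrt{\alpha}}\sum_s \sqrt{\alpha_s}\,|s\rangle\) where \(\alpha_s > 0\) and \(\alpha = \sum_s \alpha_s\), and let \(S\) be the select unitary \(S = \sum_s |s\rangle\langle s|\otimes A_s\) with each \(A_s\) unitary. Then \((\langle 0|\otimes I)\,(P^\dagger\otimes I)\,S\,(P\otimes I)\,(|0\rangle\otimes I) = \frac{1}{\alpha}\sum_s \alpha_s A_s\), i.e., the construction block-encodes the operator \(A = \sum_s \alpha_s A_s\) with normalization \(\alpha\). -/

import Mathlib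

open Matrix Complex
open scoped Kronecker ComplexOrder

/-- The square root of a positive semidefinite matrix (as in Mathlib of December 2024). -/
noncomputable def Matrix.PosSemidef.sqrt {n 𝕜 : Type*} [Fintype n] [DecidableEq n] [RCLike 𝕜]
    {A : Matrix n n 𝕜} (hA : A.PosSemidef) : Matrix n n 𝕜 :=
  hA.1.eigenvectorUnitary.1 * diagonal ((↑) ∘ Real.sqrt ∘ hA.1.eigenvalues) *
  (star hA.1.eigenvectorUnitary : Matrix n n 𝕜)

/-- Schatten 1-norm (trace norm) of a complex square matrix. -/
noncomputable def traceNorm {n : Type*} [Fintype n] [DecidableEq n] (A : Matrix n n ℂ) : ℝ :=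
  ((Matrix.posSemidef_conjTranspose_mul_self A).sqrt).trace.re

/-- Operator (spectral) norm of a complex square matrix. -/
noncomputable def opNorm {n : Type*} [Fintype n] [DecidableEq n] (A : Matrix n n ℂ) : ℝ :=
  ‖Matrix.toEuclideanCLM (𝕜 := ℂ) A‖

/-- Induced 1→1 norm of a superoperator (map on matrices). -/
noncomputable def indNorm {n : Type*} [Fintype n] [DecidableEq n]
    (f : Matrix n n ℂ → Matrix n n ℂ) : ℝ :=
  sSup {y | ∃ X : Matrix n n ℂ, traceNorm X ≤ 1 ∧ y = traceNorm (f X)}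

/-- Partial trace over the environment (second) tensor factor. -/
noncomputable def ptraceE {s e : Type*} [Fintype e]
    (A : Matrix (s × e) (s × e) ℂ) : Matrix s s ℂ :=
  Matrix.of fun i j => ∑ k, A (i, k) (j, k)

/-- A density matrix: positive semidefinite with unit trace. -/
def IsDensity {n : Type*} [Fintype n] [DecidableEq n] (ρ : Matrix n n ℂ) : Prop :=
  ρ.PosSemidef ∧ ρ.trace = 1

/-- Commutator of matrices. -/
noncomputable def mcomm {n : Type*} [Fintype n] (A X : Matrix n n ℂ) : Matrix n n ℂ := A * X - X * A


/-! Conjugating the block-diagonal select matrix by `P ⊗ I` mixes its blocks: the `(z, z)` block of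
`(Pᴴ ⊗ I) S (P ⊗ I)` is `∑ₛ |P s z|² • A s`, and the prepared column `P s z = √(αₛ / α)` makes these
weights `αₛ / α`. -/

namespace Matrix

variable {a d R : Type*} [Fintype a] [DecidableEq a] [Fintype d] [DecidableEq d]

def selectMatrix [Zero R] (A : a → Matrix d d R) : Matrix (a × d) (a × d) R :=
  of fun p q => if p.1 = q.1 then A p.1 p.2 q.2 else 0

theorem kronecker_conjTranspose_mul_selectMatrix_mul_kronecker_apply [Semiring R] [StarRing R]
    (Q P : Matrix a a R) (A : a → Matrix d d R) (z z' : a) (i j : d) :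
    ((Qᴴ ⊗ₖ (1 : Matrix d d R)) * selectMatrix A * (P ⊗ₖ (1 : Matrix d d R))) (z, i) (z', j) =
      ∑ s, star (Q s z) * A s i j * P s z' := by
  simp [mul_apply, Fintype.sum_prod_type, selectMatrix, one_apply, ite_mul, mul_ite]

theorem kronecker_conjTranspose_mul_selectMatrix_mul_kronecker_block [CommSemiring R] [StarRing R]
    (Q P : Matrix a a R) (A : a → Matrix d d R) (z z' : a) :
    (of fun i j =>
        ((Qᴴ ⊗ₖ (1 : Matrix d d R)) * selectMatrix A * (P ⊗ₖ (1 : Matrix d d R))) (z, i) (z', j)) =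
      ∑ s, (star (Q s z) * P s z') • A s := by
  ext i j
  simp only [of_apply, kronecker_conjTranspose_mul_selectMatrix_mul_kronecker_apply, sum_apply,
    smul_apply, smul_eq_mul]
  exact Finset.sum_congr rfl fun s _ => mul_right_comm _ _ _

end Matrix

theorem stmt14_general {a d : Type*} [Fintype a] [DecidableEq a] [Fintype d] [DecidableEq d]
    (z : a) (α : a → ℝ) (hα : ∀ s, 0 < α s)
    (P : Matrix a a ℂ)
    (A : a → Matrix d d ℂ)
    (hPz : ∀ s, P.mulVec (Pi.single z 1) s =
      ((Real.sqrt (α s) / Real.sqrt (∑ s', α s') : ℝ) : ℂ)) :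
    let Ssel : Matrix (a × d) (a × d) ℂ :=
      Matrix.of fun p q => if p.1 = q.1 then A p.1 p.2 q.2 else 0
    (Matrix.of fun i j =>
        ((Pᴴ ⊗ₖ (1 : Matrix d d ℂ)) * Ssel * (P ⊗ₖ (1 : Matrix d d ℂ))) (z, i) (z, j)) =
      (((∑ s', α s')⁻¹ : ℝ) : ℂ) • ∑ s, ((α s : ℝ) : ℂ) • A s := by
  have hcol s : P s z = ((Real.sqrt (α s) / Real.sqrt (∑ s', α s') : ℝ) : ℂ) := by
    simpa [mulVec_single_one] using hPz s
  have hsum : 0 ≤ ∑ s', α s' := Finset.sum_nonneg fun s _ => (hα s).le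
  have hweight s : star (P s z) * P s z = (((∑ s', α s')⁻¹ * α s : ℝ) : ℂ) := by
    rw [hcol, Complex.star_def, Complex.conj_ofReal, ← Complex.ofReal_mul, div_mul_div_comm,
      Real.mul_self_sqrt (hα s).le, Real.mul_self_sqrt hsum, inv_mul_eq_div]
  calc _ = ∑ s, (star (P s z) * P s z) • A s :=
        kronecker_conjTranspose_mul_selectMatrix_mul_kronecker_block P P A z z
    _ = _ := by simp only [hweight, Complex.ofReal_mul, mul_smul, Finset.smul_sum]

/-- The prepare-select construction block-encodes A = ∑ₛ αₛ Aₛ with normalization α. -/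
theorem stmt14 {a d : Type*} [Fintype a] [DecidableEq a] [Fintype d] [DecidableEq d]
    (z : a) (α : a → ℝ) (hα : ∀ s, 0 < α s)
    (P : Matrix a a ℂ) (hP : P ∈ Matrix.unitaryGroup a ℂ)
    (A : a → Matrix d d ℂ) (hA : ∀ s, A s ∈ Matrix.unitaryGroup d ℂ)
    (hPz : ∀ s, P.mulVec (Pi.single z 1) s =
      ((Real.sqrt (α s) / Real.sqrt (∑ s', α s') : ℝ) : ℂ)) :
    let Ssel : Matrix (a × d) (a × d) ℂ :=
      Matrix.of fun p q => if p.1 = q.1 then A p.1 p.2 q.2 else 0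
    (Matrix.of fun i j =>
        ((Pᴴ ⊗ₖ (1 : Matrix d d ℂ)) * Ssel * (P ⊗ₖ (1 : Matrix d d ℂ))) (z, i) (z, j)) =
      (((∑ s', α s')⁻¹ : ℝ) : ℂ) • ∑ s, ((α s : ℝ) : ℂ) • A s :=
  stmt14_general z α hα P A hPz
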